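/- For all m ≥ 0 and n ≥ 3m, the number of linear chord diagrams of size n with all chords of length at least n - m equals |C_{2m}(3m)| · (m+1)^{n-3m}, where C_{2m}(3m) is the set of diagrams of size 3m with all chords of length at least 2m. -/

import Mathlib

/-!
A diagram is recorded by its set of chords `(s, e)`, i.e. by a bijection from its set `A` of
openers onto its set `B` of closers with `s + k ≤ e`. The sets of admissible closers are nested,
so these bijections are counted by the product over the openers `a` of
`#{b ∈ B | a + k ≤ b} - #{x ∈ A | a < x}`.

For `n = k + m` with `k ≥ 2m`, a chord of length at least `k` can neither close at a point `≤ k`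
nor open at a point `> k + 2m`, so `A = {1, …, k} ∪ (U + k)` for an `m`-subset `U` of
`{1, …, 2m}`. In the product, the openers `i ≤ 2m` and `u + k` contribute factors that depend on
`U` but not on `k`, and each of the `k - 2m` openers `2m < i ≤ k` contributes `m + 1`. Hence
`|C_k(k + m)|` is `(m + 1) ^ (k - 2m)` times its value at `k = 2m`.
-/

/-- The set of linear chord diagrams of size `n` in which every chord has length at least `k`:
partitions of `{1,...,2n}` into blocks of size two `{s,e}` with `s < e` and `e - s ≥ k`. -/
def LCD (n k : ℕ) : Set (Finpartition (Finset.Icc 1 (2*n))) :=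
  {P | ∀ p ∈ P.parts, ∃ s e : ℕ, s < e ∧ p = {s, e} ∧ k ≤ e - s}

open Finset

def chordSet (p : ℕ × ℕ) : Finset ℕ := {p.1, p.2}

theorem chordSet_injOn : Set.InjOn chordSet {p | p.1 < p.2} := by
  rintro ⟨a, b⟩ (hab : a < b) ⟨c, d⟩ (hcd : c < d) h
  simp only [chordSet, Finset.ext_iff, mem_insert, mem_singleton] at h
  have := h a; have := h b; have := h c; have := h d
  ext <;> simp only <;> omega

/-- The card conditions make `M` the graph of a bijection `A → B`. -/
structure IsChordMatching (k : ℕ) (A B : Finset ℕ) (M : Finset (ℕ × ℕ)) : Prop where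
  image_fst : M.image Prod.fst = A
  image_snd : M.image Prod.snd = B
  card_left : #M = #A
  card_right : #M = #B
  add_le : ∀ p ∈ M, p.1 + k ≤ p.2

open scoped Classical in
noncomputable def chordMatchings (k : ℕ) (A B : Finset ℕ) : Finset (Finset (ℕ × ℕ)) :=
  {M ∈ (A ×ˢ B).powerset | IsChordMatching k A B M}

section Matchings

variable {k : ℕ} {A B : Finset ℕ} {M : Finset (ℕ × ℕ)}

theorem mem_chordMatchings : M ∈ chordMatchings k A B ↔ IsChordMatching k A B M := by
  simp only [chordMatchings, mem_filter, mem_powerset, and_iff_right_iff_imp]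
  intro h p hp
  exact mem_product.2 ⟨h.image_fst ▸ mem_image_of_mem _ hp, h.image_snd ▸ mem_image_of_mem _ hp⟩

theorem IsChordMatching.injOn_fst (h : IsChordMatching k A B M) :
    Set.InjOn Prod.fst (M : Set (ℕ × ℕ)) :=
  card_image_iff.mp (by rw [h.image_fst, h.card_left])

theorem IsChordMatching.injOn_snd (h : IsChordMatching k A B M) :
    Set.InjOn Prod.snd (M : Set (ℕ × ℕ)) :=
  card_image_iff.mp (by rw [h.image_snd, h.card_right])

theorem IsChordMatching.fst_mem (h : IsChordMatching k A B M) {p : ℕ × ℕ} (hp : p ∈ M) :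
    p.1 ∈ A :=
  h.image_fst ▸ mem_image_of_mem _ hp

theorem IsChordMatching.snd_mem (h : IsChordMatching k A B M) {p : ℕ × ℕ} (hp : p ∈ M) :
    p.2 ∈ B :=
  h.image_snd ▸ mem_image_of_mem _ hp

theorem IsChordMatching.fst_lt_snd (h : IsChordMatching k A B M) (hAB : Disjoint A B)
    {p : ℕ × ℕ} (hp : p ∈ M) : p.1 < p.2 :=
  lt_of_le_of_ne (le_of_add_le_left (h.add_le p hp)) fun he =>
    disjoint_left.1 hAB (h.fst_mem hp) (he ▸ h.snd_mem hp)

theorem IsChordMatching.eq_of_mem_chordSet (h : IsChordMatching k A B M) (hAB : Disjoint A B)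
    {p q : ℕ × ℕ} (hp : p ∈ M) (hq : q ∈ M) {x : ℕ} (hxp : x ∈ chordSet p)
    (hxq : x ∈ chordSet q) : p = q := by
  simp only [chordSet, mem_insert, mem_singleton] at hxp hxq
  have hpA := h.fst_mem hp; have hpB := h.snd_mem hp
  have hqA := h.fst_mem hq; have hqB := h.snd_mem hq
  rcases hxp with rfl | rfl <;> rcases hxq with hx | hx
  · exact h.injOn_fst hp hq hx
  · exact (disjoint_left.1 hAB hpA (hx ▸ hqB)).elim
  · exact (disjoint_left.1 hAB hqA (hx ▸ hpB)).elim
  · exact h.injOn_snd hp hq hx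

theorem IsChordMatching.erase (h : IsChordMatching k A B M) {p : ℕ × ℕ} (hp : p ∈ M) :
    IsChordMatching k (A.erase p.1) (B.erase p.2) (M.erase p) where
  image_fst := by
    rw [erase_eq, image_sdiff_of_injOn h.injOn_fst (singleton_subset_iff.2 hp), image_singleton,
      h.image_fst, erase_eq]
  image_snd := by
    rw [erase_eq, image_sdiff_of_injOn h.injOn_snd (singleton_subset_iff.2 hp), image_singleton,
      h.image_snd, erase_eq]
  card_left := by rw [card_erase_of_mem hp, card_erase_of_mem (h.fst_mem hp), h.card_left]
  card_right := by rw [card_erase_of_mem hp, card_erase_of_mem (h.snd_mem hp), h.card_right]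
  add_le q hq := h.add_le q (mem_of_mem_erase hq)

theorem IsChordMatching.insert (h : IsChordMatching k A B M) {a b : ℕ} (ha : a ∉ A) (hb : b ∉ B)
    (hab : a + k ≤ b) : IsChordMatching k (insert a A) (insert b B) (insert (a, b) M) := by
  have hM : (a, b) ∉ M := fun hm => ha (h.fst_mem hm)
  exact
    { image_fst := by rw [image_insert, h.image_fst]
      image_snd := by rw [image_insert, h.image_snd]
      card_left := by rw [card_insert_of_notMem hM, card_insert_of_notMem ha, h.card_left]
      card_right := by rw [card_insert_of_notMem hM, card_insert_of_notMem hb, h.card_right]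
      add_le := (forall_mem_insert _ _ _).2 ⟨hab, h.add_le⟩ }

theorem chordMatchings_empty : chordMatchings k ∅ ∅ = {∅} := by
  ext M
  rw [mem_chordMatchings, mem_singleton]
  refine ⟨fun h => image_eq_empty.1 h.image_fst, ?_⟩
  rintro rfl
  exact ⟨rfl, rfl, rfl, rfl, by simp⟩

theorem chordMatchings_insert_of_forall_lt {a : ℕ} (B : Finset ℕ) (ha : ∀ x ∈ A, x < a) :
    chordMatchings k (insert a A) B = {b ∈ B | a + k ≤ b}.biUnion fun b =>
      (chordMatchings k A (B.erase b)).image (insert (a, b)) := by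
  have haA : a ∉ A := fun h => lt_irrefl a (ha a h)
  ext M
  simp only [mem_biUnion, mem_filter, mem_image, mem_chordMatchings]
  constructor
  · intro h
    obtain ⟨⟨a', b⟩, hp, rfl : a' = a⟩ := mem_image.1 (h.image_fst ▸ mem_insert_self a A)
    refine ⟨b, ⟨h.snd_mem hp, h.add_le _ hp⟩, M.erase (a', b), ?_, insert_erase hp⟩
    simpa [erase_insert haA] using h.erase hp
  · rintro ⟨b, ⟨hb, hab⟩, M, hM, rfl⟩
    simpa [insert_erase hb] using hM.insert haA (notMem_erase b B) hab

theorem card_chordMatchings_insert_of_forall_lt {a : ℕ} (B : Finset ℕ) (ha : ∀ x ∈ A, x < a) :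
    #(chordMatchings k (insert a A) B) =
      ∑ b ∈ B with a + k ≤ b, #(chordMatchings k A (B.erase b)) := by
  have haA : a ∉ A := fun h => lt_irrefl a (ha a h)
  have hnot : ∀ {B' : Finset ℕ} {b : ℕ}, ∀ M ∈ chordMatchings k A B', (a, b) ∉ M :=
    fun M hM hab => haA ((mem_chordMatchings.1 hM).fst_mem hab)
  rw [chordMatchings_insert_of_forall_lt B ha, card_biUnion]
  · refine sum_congr rfl fun b _ => card_image_of_injOn fun M₁ h₁ M₂ h₂ he => ?_
    rw [← erase_insert (hnot M₁ h₁), he, erase_insert (hnot M₂ h₂)]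
  · intro b₁ _ b₂ _ hne
    refine disjoint_left.2 fun M hM₁ hM₂ => ?_
    obtain ⟨M₁, hM₁', rfl⟩ := mem_image.1 hM₁
    obtain ⟨M₂, _, he⟩ := mem_image.1 hM₂
    rcases mem_insert.1 (he ▸ mem_insert_self (a, b₂) M₂) with h | h
    · exact hne (Prod.ext_iff.1 h).2.symm
    · exact hnot M₁ hM₁' h

end Matchings

/-- Matching the openers from the largest down, the opener `a` finds `#{x ∈ A | a < x}` of its
admissible closers already taken. -/
theorem card_chordMatchings {k : ℕ} {A B : Finset ℕ} (hAB : #A = #B)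
    (hpos : ∀ a ∈ A, #{x ∈ A | a < x} < #{b ∈ B | a + k ≤ b}) :
    #(chordMatchings k A B) = ∏ a ∈ A, (#{b ∈ B | a + k ≤ b} - #{x ∈ A | a < x}) := by
  induction A using Finset.induction_on_max generalizing B with
  | empty =>
    rw [card_empty, eq_comm, card_eq_zero] at hAB
    rw [hAB, chordMatchings_empty, card_singleton, prod_empty]
  | insert a A ha ih =>
    have haA : a ∉ A := fun h => lt_irrefl a (ha a h)
    have hA : ∀ x ∈ A, #{y ∈ insert a A | x < y} = #{y ∈ A | x < y} + 1 := fun x hx => by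
      rw [filter_insert, if_pos (ha x hx), card_insert_of_notMem (fun h => haA (mem_filter.1 h).1)]
    have hB : ∀ b ∈ {b ∈ B | a + k ≤ b}, ∀ x ∈ A,
        #{y ∈ B.erase b | x + k ≤ y} + 1 = #{y ∈ B | x + k ≤ y} := fun b hb x hx => by
      obtain ⟨hbB, hab⟩ := mem_filter.1 hb
      rw [filter_erase, card_erase_add_one (mem_filter.2 ⟨hbB, by linarith [ha x hx]⟩)]
    have hmax : {x ∈ insert a A | a < x} = ∅ := filter_false_of_mem fun x hx => by
      rcases mem_insert.1 hx with rfl | hx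
      · exact lt_irrefl _
      · exact (ha x hx).not_gt
    rw [card_chordMatchings_insert_of_forall_lt B ha, prod_insert haA, hmax, card_empty,
      Nat.sub_zero, ← smul_eq_mul, ← sum_const]
    refine sum_congr rfl fun b hb => ?_
    have hcard : #A = #(B.erase b) := by
      rw [card_insert_of_notMem haA] at hAB
      rw [← Nat.add_right_cancel_iff (n := 1), card_erase_add_one (mem_filter.1 hb).1, hAB]
    rw [ih hcard fun x hx => by
      have := hpos x (mem_insert_of_mem hx); have := hA x hx; have := hB b hb x hx; omega]
    refine prod_congr rfl fun x hx => ?_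
    have := hA x hx; have := hB b hb x hx; omega

/-- The diagrams of `LCD n k`, each recorded by its set of chords. -/
noncomputable def chordDiagrams (n k : ℕ) : Finset (Finset (ℕ × ℕ)) :=
  (Icc 1 (2 * n)).powerset.biUnion fun A => chordMatchings k A (Icc 1 (2 * n) \ A)

theorem mem_chordDiagrams {n k : ℕ} {M : Finset (ℕ × ℕ)} :
    M ∈ chordDiagrams n k ↔ ∃ A ⊆ Icc 1 (2 * n), IsChordMatching k A (Icc 1 (2 * n) \ A) M := by
  simp only [chordDiagrams, mem_biUnion, mem_powerset, mem_chordMatchings]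

theorem card_chordDiagrams (n k : ℕ) : #(chordDiagrams n k) =
    ∑ A ∈ (Icc 1 (2 * n)).powerset, #(chordMatchings k A (Icc 1 (2 * n) \ A)) :=
  card_biUnion fun _ _ _ _ hne => disjoint_left.2 fun _ h h' =>
    hne ((mem_chordMatchings.1 h).image_fst.symm.trans (mem_chordMatchings.1 h').image_fst)

theorem exists_mem_LCD_parts_eq {n k : ℕ} {M : Finset (ℕ × ℕ)} (hM : M ∈ chordDiagrams n k) :
    ∃ P ∈ LCD n k, P.parts = M.image chordSet := by
  obtain ⟨A, hA, h⟩ := mem_chordDiagrams.1 hM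
  have hAB : Disjoint A (Icc 1 (2 * n) \ A) := disjoint_sdiff
  refine ⟨Finpartition.ofExistsUnique (M.image chordSet) ?_ ?_ ?_, ?_, rfl⟩
  · simp only [forall_mem_image, chordSet, insert_subset_iff, singleton_subset_iff]
    exact fun p hp => ⟨hA (h.fst_mem hp), (mem_sdiff.1 (h.snd_mem hp)).1⟩
  · intro x hx
    obtain ⟨p, hp, hxp⟩ : ∃ p ∈ M, x ∈ chordSet p := by
      by_cases hxA : x ∈ A
      · obtain ⟨p, hp, rfl⟩ := mem_image.1 (h.image_fst ▸ hxA)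
        exact ⟨p, hp, mem_insert_self _ _⟩
      · obtain ⟨p, hp, rfl⟩ := mem_image.1 (h.image_snd ▸ mem_sdiff.2 ⟨hx, hxA⟩)
        exact ⟨p, hp, mem_insert_of_mem (mem_singleton_self _)⟩
    refine ⟨chordSet p, ⟨mem_image_of_mem _ hp, hxp⟩, ?_⟩
    rintro _ ⟨hq', hxq⟩
    obtain ⟨q, hq, rfl⟩ := mem_image.1 hq'
    rw [h.eq_of_mem_chordSet hAB hp hq hxp hxq]
  · simp [chordSet]
  · intro t ht
    obtain ⟨p, hp, rfl⟩ := mem_image.1 ht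
    exact ⟨p.1, p.2, h.fst_lt_snd hAB hp, rfl, Nat.le_sub_of_add_le' (h.add_le p hp)⟩

open scoped Classical in
noncomputable def chordsOf {n : ℕ} (P : Finpartition (Icc 1 (2 * n))) : Finset (ℕ × ℕ) :=
  {q ∈ Icc 1 (2 * n) ×ˢ Icc 1 (2 * n) | q.1 < q.2 ∧ chordSet q ∈ P.parts}

section ChordsOf

variable {n k : ℕ} {P : Finpartition (Icc 1 (2 * n))}

theorem mem_chordsOf {q : ℕ × ℕ} : q ∈ chordsOf P ↔ q.1 < q.2 ∧ chordSet q ∈ P.parts := by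
  simp only [chordsOf, mem_filter, mem_product, and_iff_right_iff_imp]
  exact fun ⟨_, h⟩ =>
    ⟨P.le h (mem_insert_self _ _), P.le h (mem_insert_of_mem (mem_singleton_self _))⟩

theorem eq_of_mem_chordSet_of_mem_chordsOf {q q' : ℕ × ℕ} (hq : q ∈ chordsOf P)
    (hq' : q' ∈ chordsOf P) {x : ℕ} (hx : x ∈ chordSet q) (hx' : x ∈ chordSet q') : q = q' :=
  chordSet_injOn (mem_chordsOf.1 hq).1 (mem_chordsOf.1 hq').1
    (P.eq_of_mem_parts (mem_chordsOf.1 hq).2 (mem_chordsOf.1 hq').2 hx hx')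

theorem exists_mem_chordsOf_chordSet_eq (hP : P ∈ LCD n k) {t : Finset ℕ} (ht : t ∈ P.parts) :
    ∃ q ∈ chordsOf P, chordSet q = t := by
  obtain ⟨s, e, hse, rfl, -⟩ := hP t ht
  exact ⟨(s, e), mem_chordsOf.2 ⟨hse, ht⟩, rfl⟩

theorem image_chordSet_chordsOf (hP : P ∈ LCD n k) : (chordsOf P).image chordSet = P.parts := by
  ext t
  refine ⟨fun ht => ?_, fun ht => mem_image.2 (exists_mem_chordsOf_chordSet_eq hP ht)⟩
  obtain ⟨q, hq, rfl⟩ := mem_image.1 ht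
  exact (mem_chordsOf.1 hq).2

theorem chordsOf_mem_chordDiagrams (hP : P ∈ LCD n k) : chordsOf P ∈ chordDiagrams n k := by
  have hfst : ∀ q : ℕ × ℕ, q.1 ∈ chordSet q := fun _ => mem_insert_self _ _
  have hsnd : ∀ q : ℕ × ℕ, q.2 ∈ chordSet q := fun _ => mem_insert_of_mem (mem_singleton_self _)
  have himage_snd : (chordsOf P).image Prod.snd = Icc 1 (2 * n) \ (chordsOf P).image Prod.fst := by
    ext x
    simp only [mem_image, mem_sdiff, not_exists, not_and]
    constructor
    · rintro ⟨q, hq, rfl⟩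
      refine ⟨P.le (mem_chordsOf.1 hq).2 (hsnd q), fun q' hq' he => ?_⟩
      obtain rfl := eq_of_mem_chordSet_of_mem_chordsOf hq hq' (hsnd q) (he ▸ hfst q')
      exact (mem_chordsOf.1 hq).1.ne he
    · rintro ⟨hx, hxA⟩
      obtain ⟨t, ht, hxt⟩ := P.exists_mem hx
      obtain ⟨q, hq, rfl⟩ := exists_mem_chordsOf_chordSet_eq hP ht
      rcases mem_insert.1 hxt with rfl | hxq
      · exact (hxA q hq rfl).elim
      · exact ⟨q, hq, (mem_singleton.1 hxq).symm⟩
  have hinj_fst : Set.InjOn Prod.fst (chordsOf P : Set (ℕ × ℕ)) := fun q hq q' hq' he =>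
    eq_of_mem_chordSet_of_mem_chordsOf hq hq' (hfst q) (he ▸ hfst q')
  have hinj_snd : Set.InjOn Prod.snd (chordsOf P : Set (ℕ × ℕ)) := fun q hq q' hq' he =>
    eq_of_mem_chordSet_of_mem_chordsOf hq hq' (hsnd q) (he ▸ hsnd q')
  have hlong : ∀ q ∈ chordsOf P, q.1 + k ≤ q.2 := fun q hq => by
    obtain ⟨hlt, ht⟩ := mem_chordsOf.1 hq
    obtain ⟨s, e, hse, he, hk⟩ := hP _ ht
    obtain rfl : q = (s, e) := chordSet_injOn hlt hse he
    exact Nat.add_le_of_le_sub' hse.le hk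
  refine mem_chordDiagrams.2 ⟨_, image_subset_iff.2 fun q hq => P.le (mem_chordsOf.1 hq).2 (hfst q),
    rfl, himage_snd, (card_image_of_injOn hinj_fst).symm,
    himage_snd ▸ (card_image_of_injOn hinj_snd).symm, hlong⟩

end ChordsOf

theorem injOn_image_chordSet (n k : ℕ) :
    Set.InjOn (image chordSet) (chordDiagrams n k : Set (Finset (ℕ × ℕ))) := by
  have hsub : ∀ M₁ ∈ chordDiagrams n k, ∀ M₂ ∈ chordDiagrams n k,
      M₁.image chordSet = M₂.image chordSet → M₁ ⊆ M₂ := fun M₁ h₁ M₂ h₂ he p hp => by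
    obtain ⟨q, hq, hqp⟩ := mem_image.1 (he ▸ mem_image_of_mem chordSet hp)
    obtain ⟨A₁, -, h₁⟩ := mem_chordDiagrams.1 h₁
    obtain ⟨A₂, -, h₂⟩ := mem_chordDiagrams.1 h₂
    rwa [← chordSet_injOn (h₂.fst_lt_snd disjoint_sdiff hq) (h₁.fst_lt_snd disjoint_sdiff hp) hqp]
  exact fun M₁ h₁ M₂ h₂ he => (hsub M₁ h₁ M₂ h₂ he).antisymm (hsub M₂ h₂ M₁ h₁ he.symm)

theorem card_LCD (n k : ℕ) : Nat.card (LCD n k) = #(chordDiagrams n k) := by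
  have himage : Finpartition.parts '' LCD n k = image chordSet '' ↑(chordDiagrams n k) := by
    ext t
    constructor
    · rintro ⟨P, hP, rfl⟩
      exact ⟨chordsOf P, chordsOf_mem_chordDiagrams hP, image_chordSet_chordsOf hP⟩
    · rintro ⟨M, hM, rfl⟩
      exact exists_mem_LCD_parts_eq hM
  calc Nat.card (LCD n k) = (Finpartition.parts '' LCD n k).ncard :=
        (Set.ncard_image_of_injective _ fun _ _ => Finpartition.ext).symm
    _ = #(chordDiagrams n k) := by
      rw [himage, (injOn_image_chordSet n k).ncard_image, Set.ncard_coe_finset]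

theorem card_filter_sdiff_Icc_add {N t : ℕ} {A : Finset ℕ} (hA : A ⊆ Icc 1 N) (ht : 1 ≤ t) :
    #{b ∈ Icc 1 N \ A | t ≤ b} + #{a ∈ A | t ≤ a} = N + 1 - t := by
  have hIcc : {x ∈ Icc 1 N | t ≤ x} = Icc t N := by
    ext x
    simp only [mem_filter, mem_Icc]
    omega
  rw [← card_union_of_disjoint (disjoint_filter_filter sdiff_disjoint), ← filter_union,
    sdiff_union_of_subset hA, hIcc, Nat.card_Icc]

def openers (k : ℕ) (U : Finset ℕ) : Finset ℕ := Icc 1 k ∪ U.image (· + k)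

section Openers

variable {k m : ℕ} {U : Finset ℕ}

theorem zero_notMem_of_subset_Icc {N : ℕ} (hU : U ⊆ Icc 1 N) : 0 ∉ U :=
  fun h0 => by simpa using hU h0

theorem disjoint_Icc_image_add (hU : 0 ∉ U) : Disjoint (Icc 1 k) (U.image (· + k)) := by
  refine disjoint_left.2 fun x hx hx' => ?_
  obtain ⟨u, hu, rfl⟩ := mem_image.1 hx'
  have : u ≠ 0 := fun h => hU (h ▸ hu)
  have := mem_Icc.1 hx
  omega

theorem card_openers (hU : 0 ∉ U) : #(openers k U) = k + #U := by
  rw [openers, card_union_of_disjoint (disjoint_Icc_image_add hU), Nat.card_Icc,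
    card_image_of_injective _ (add_left_injective k), Nat.add_sub_cancel]

theorem card_filter_openers (hU : 0 ∉ U) (p : ℕ → Prop) [DecidablePred p] :
    #{x ∈ openers k U | p x} = #{i ∈ Icc 1 k | p i} + #{u ∈ U | p (u + k)} := by
  rw [openers, filter_union, card_union_of_disjoint
    (disjoint_filter_filter (disjoint_Icc_image_add hU)), filter_image,
    card_image_of_injective _ (add_left_injective k)]

theorem prod_openers (hU : 0 ∉ U) (f : ℕ → ℕ) :
    ∏ a ∈ openers k U, f a = (∏ i ∈ Icc 1 k, f i) * ∏ u ∈ U, f (u + k) := by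
  rw [openers, prod_union (disjoint_Icc_image_add hU),
    prod_image fun _ _ _ _ => (add_left_injective k ·)]

theorem add_mem_openers_iff {u : ℕ} (hu : 0 < u) : u + k ∈ openers k U ↔ u ∈ U := by
  simp only [openers, mem_union, mem_Icc, mem_image, add_left_inj, exists_eq_right]
  exact or_iff_right (by omega)

theorem openers_subset_Icc (hU : U ⊆ Icc 1 (2 * m)) : openers k U ⊆ Icc 1 (2 * (k + m)) := by
  refine union_subset (Icc_subset_Icc_right (by omega)) (image_subset_iff.2 fun u hu => ?_)
  have := mem_Icc.1 (hU hu)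
  exact mem_Icc.2 ⟨by omega, by omega⟩

theorem exists_openers_eq (hk : 2 * m ≤ k) {A : Finset ℕ} {M : Finset (ℕ × ℕ)}
    (hA : A ⊆ Icc 1 (2 * (k + m))) (h : IsChordMatching k A (Icc 1 (2 * (k + m)) \ A) M) :
    ∃ U ∈ powersetCard m (Icc 1 (2 * m)), openers k U = A := by
  have hlow : Icc 1 k ⊆ A := fun x hx => by
    by_contra hxA
    have hx := mem_Icc.1 hx
    obtain ⟨p, hp, rfl⟩ :=
      mem_image.1 (h.image_snd ▸ mem_sdiff.2 ⟨mem_Icc.2 ⟨hx.1, by omega⟩, hxA⟩)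
    have := mem_Icc.1 (hA (h.fst_mem hp))
    have := h.add_le p hp
    omega
  have hhigh : ∀ a ∈ A, a ≤ k + 2 * m := fun a ha => by
    obtain ⟨p, hp, rfl⟩ := mem_image.1 (h.image_fst ▸ ha)
    have := mem_Icc.1 (mem_sdiff.1 (h.snd_mem hp)).1
    have := h.add_le p hp
    omega
  have hopen : openers k {u ∈ Icc 1 (2 * m) | u + k ∈ A} = A := by
    ext x
    simp only [openers, mem_union, mem_image, mem_filter]
    constructor
    · rintro (hx | ⟨u, ⟨-, hu⟩, rfl⟩)
      exacts [hlow hx, hu]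
    · intro hx
      have := mem_Icc.1 (hA hx)
      have := hhigh x hx
      by_cases hxk : x ≤ k
      · exact Or.inl (mem_Icc.2 ⟨by omega, hxk⟩)
      · refine Or.inr ⟨x - k, ⟨mem_Icc.2 ⟨by omega, by omega⟩, ?_⟩, by omega⟩
        rwa [Nat.sub_add_cancel (by omega)]
  have hcardA : #A = k + m := by
    have := h.card_left.symm.trans h.card_right
    rw [card_sdiff_of_subset hA, Nat.card_Icc] at this
    omega
  refine ⟨_, mem_powersetCard.2 ⟨filter_subset _ _, ?_⟩, hopen⟩
  have := card_openers (k := k)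
    (zero_notMem_of_subset_Icc (filter_subset (· + k ∈ A) (Icc 1 (2 * m))))
  rw [hopen] at this
  omega

end Openers

section Count

variable {k m : ℕ} {U : Finset ℕ}

theorem card_chordDiagrams_add_eq_sum (hk : 2 * m ≤ k) :
    #(chordDiagrams (k + m) k) = ∑ U ∈ powersetCard m (Icc 1 (2 * m)),
      #(chordMatchings k (openers k U) (Icc 1 (2 * (k + m)) \ openers k U)) := by
  have hU0 : ∀ U ∈ powersetCard m (Icc 1 (2 * m)), 0 ∉ U := fun _ hU =>
    zero_notMem_of_subset_Icc (mem_powersetCard.1 hU).1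
  have hinj : Set.InjOn (openers k) (powersetCard m (Icc 1 (2 * m)) : Set (Finset ℕ)) :=
    fun U₁ h₁ U₂ h₂ he => by
      ext u
      rcases Nat.eq_zero_or_pos u with rfl | hu
      · exact iff_of_false (hU0 U₁ h₁) (hU0 U₂ h₂)
      · rw [← add_mem_openers_iff (k := k) hu, he, add_mem_openers_iff hu]
  have hsub : (powersetCard m (Icc 1 (2 * m))).image (openers k) ⊆ (Icc 1 (2 * (k + m))).powerset :=
    image_subset_iff.2 fun U hU => mem_powerset.2 (openers_subset_Icc (mem_powersetCard.1 hU).1)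
  rw [card_chordDiagrams, ← sum_image (g := openers k)
    (f := fun A => #(chordMatchings k A (Icc 1 (2 * (k + m)) \ A))) hinj]
  refine (sum_subset hsub fun A hA hA' => card_eq_zero.2 (eq_empty_of_forall_notMem fun M hM =>
    hA' (mem_image.2 ?_))).symm
  exact exists_openers_eq hk (mem_powerset.1 hA) (mem_chordMatchings.1 hM)

theorem card_filter_sdiff_openers_of_mem_Icc (hU : U ⊆ Icc 1 (2 * m)) (hUm : #U = m) {i : ℕ}
    (hi : i ∈ Icc 1 k) :
    #{b ∈ Icc 1 (2 * (k + m)) \ openers k U | i + k ≤ b} =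
      #{x ∈ openers k U | i < x} + (m + 1 - #{u ∈ U | i ≤ u}) := by
  have hU0 := zero_notMem_of_subset_Icc hU
  have hi := mem_Icc.1 hi
  have hcount := card_filter_sdiff_Icc_add (openers_subset_Icc (k := k) hU) (t := i + k) (by omega)
  have hlate : {j ∈ Icc 1 k | i + k ≤ j} = ∅ :=
    filter_false_of_mem fun j hj => by have := mem_Icc.1 hj; omega
  have hafter : {j ∈ Icc 1 k | i < j} = Ioc i k := by
    ext j
    simp only [mem_filter, mem_Icc, mem_Ioc]
    omega
  have hall : {u ∈ U | i < u + k} = U :=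
    filter_true_of_mem fun u hu => by have := mem_Icc.1 (hU hu); omega
  have hle : #{u ∈ U | i ≤ u} ≤ m := hUm ▸ card_filter_le U _
  rw [card_filter_openers hU0, hlate, card_empty, zero_add] at hcount
  simp only [add_le_add_iff_right] at hcount
  rw [card_filter_openers hU0, hafter, hall, Nat.card_Ioc, hUm]
  omega

theorem card_filter_lt_le_sub (hU : U ⊆ Icc 1 (2 * m)) (u : ℕ) : #{v ∈ U | u < v} ≤ 2 * m - u :=
  calc #{v ∈ U | u < v} ≤ #(Ioc u (2 * m)) := card_le_card fun v hv => by
        obtain ⟨hv, huv⟩ := mem_filter.1 hv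
        exact mem_Ioc.2 ⟨huv, (mem_Icc.1 (hU hv)).2⟩
    _ = 2 * m - u := Nat.card_Ioc _ _

theorem card_filter_sdiff_openers_of_mem (hk : 2 * m ≤ k) (hU : U ⊆ Icc 1 (2 * m)) {u : ℕ}
    (hu : u ∈ U) :
    #{b ∈ Icc 1 (2 * (k + m)) \ openers k U | u + k + k ≤ b} =
      #{x ∈ openers k U | u + k < x} + (2 * m + 1 - u - #{v ∈ U | u < v}) := by
  have hU0 := zero_notMem_of_subset_Icc hU
  have hu := mem_Icc.1 (hU hu)
  have hcount := card_filter_sdiff_Icc_add (openers_subset_Icc (k := k) hU) (t := u + k + k)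
    (by omega)
  have hnone : {x ∈ openers k U | u + k + k ≤ x} = ∅ := by
    refine filter_false_of_mem fun x hx => ?_
    rcases mem_union.1 hx with hx | hx
    · have := mem_Icc.1 hx
      omega
    · obtain ⟨v, hv, rfl⟩ := mem_image.1 hx
      have := mem_Icc.1 (hU hv)
      omega
  have hlate : {j ∈ Icc 1 k | u + k < j} = ∅ :=
    filter_false_of_mem fun j hj => by have := mem_Icc.1 hj; omega
  have hle := card_filter_lt_le_sub hU u
  rw [hnone, card_empty, add_zero] at hcount
  rw [card_filter_openers hU0, hlate, card_empty, zero_add]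
  simp only [add_lt_add_iff_right]
  omega

theorem card_chordMatchings_openers (hk : 2 * m ≤ k) (hU : U ⊆ Icc 1 (2 * m)) (hUm : #U = m) :
    #(chordMatchings k (openers k U) (Icc 1 (2 * (k + m)) \ openers k U)) =
      (∏ i ∈ Icc 1 k, (m + 1 - #{u ∈ U | i ≤ u})) *
        ∏ u ∈ U, (2 * m + 1 - u - #{v ∈ U | u < v}) := by
  have hU0 := zero_notMem_of_subset_Icc hU
  have hcard : #(openers k U) = #(Icc 1 (2 * (k + m)) \ openers k U) := by
    rw [card_sdiff_of_subset (openers_subset_Icc hU), card_openers hU0, Nat.card_Icc, hUm]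
    omega
  have hpos_left : ∀ i, 0 < m + 1 - #{u ∈ U | i ≤ u} := fun i => by
    have : #{u ∈ U | i ≤ u} ≤ m := hUm ▸ card_filter_le U _
    omega
  have hpos_right : ∀ u ∈ U, 0 < 2 * m + 1 - u - #{v ∈ U | u < v} := fun u hu => by
    have := card_filter_lt_le_sub hU u
    have := mem_Icc.1 (hU hu)
    omega
  rw [card_chordMatchings hcard, prod_openers hU0]
  · congr 1 <;> refine prod_congr rfl fun a ha => ?_
    · rw [card_filter_sdiff_openers_of_mem_Icc hU hUm ha]
      omega
    · rw [card_filter_sdiff_openers_of_mem hk hU ha]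
      omega
  · intro a ha
    rcases mem_union.1 ha with ha | ha
    · rw [card_filter_sdiff_openers_of_mem_Icc hU hUm ha]
      exact Nat.lt_add_of_pos_right (hpos_left a)
    · obtain ⟨u, hu, rfl⟩ := mem_image.1 ha
      rw [card_filter_sdiff_openers_of_mem hk hU hu]
      exact Nat.lt_add_of_pos_right (hpos_right u hu)

theorem prod_Icc_eq_mul_pow (hk : 2 * m ≤ k) (hU : U ⊆ Icc 1 (2 * m)) :
    ∏ i ∈ Icc 1 k, (m + 1 - #{u ∈ U | i ≤ u}) =
      (∏ i ∈ Icc 1 (2 * m), (m + 1 - #{u ∈ U | i ≤ u})) * (m + 1) ^ (k - 2 * m) := by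
  induction k, hk using Nat.le_induction with
  | base => rw [Nat.sub_self, pow_zero, mul_one]
  | succ k hk ih =>
    have hnone : {u ∈ U | k + 1 ≤ u} = ∅ :=
      filter_false_of_mem fun u hu => by have := mem_Icc.1 (hU hu); omega
    rw [prod_Icc_succ_top (by omega), ih, hnone, card_empty, Nat.sub_zero,
      show k + 1 - 2 * m = k - 2 * m + 1 by omega, pow_succ, mul_assoc]

theorem card_chordDiagrams_add (hk : 2 * m ≤ k) :
    #(chordDiagrams (k + m) k) = #(chordDiagrams (2 * m + m) (2 * m)) * (m + 1) ^ (k - 2 * m) := by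
  rw [card_chordDiagrams_add_eq_sum hk, card_chordDiagrams_add_eq_sum le_rfl, sum_mul]
  refine sum_congr rfl fun U hU => ?_
  obtain ⟨hU, hUm⟩ := mem_powersetCard.1 hU
  rw [card_chordMatchings_openers hk hU hUm, card_chordMatchings_openers le_rfl hU hUm,
    prod_Icc_eq_mul_pow hk hU]
  ring

end Count

theorem stmt_16 (m n : ℕ) (h3 : 3 * m ≤ n) :
    Nat.card (LCD n (n - m)) = Nat.card (LCD (3 * m) (2 * m)) * (m + 1) ^ (n - 3 * m) := by
  obtain ⟨k, rfl⟩ : ∃ k, n = k + m := ⟨n - m, by omega⟩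
  rw [card_LCD, card_LCD, show k + m - m = k by omega, show k + m - 3 * m = k - 2 * m by omega,
    show 3 * m = 2 * m + m by ring]
  exact card_chordDiagrams_add (by omega)
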